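/- Let C be a flag pure d-dimensional simplicial complex without boundary, σ a face of C, and τ ⊆ σ with |τ| = k ≥ 1. Then the intersection of sectors S_τ = ∩_{a∈τ} (link_C(a) \ σ) is pure of dimension d − k. -/

import Mathlib

variable {V : Type*} [DecidableEq V]

/-- A simplicial complex: a family of finite sets closed under taking subsets. -/
def IsComplex (D : Set (Finset V)) : Prop :=
  ∀ σ ∈ D, ∀ τ : Finset V, τ ⊆ σ → τ ∈ D

/-- The intersecting dual `U*` of a family `U` of faces of `D`. -/
def dualSet (D U : Set (Finset V)) : Set (Finset V) :=
  {σ' ∈ D | ∀ σ ∈ U, (σ' ∩ σ).Nonempty}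

/-- The upper set generated by `U` inside `D`. -/
def upperGen (D U : Set (Finset V)) : Set (Finset V) :=
  {σ' ∈ D | ∃ σ ∈ U, σ ⊆ σ'}

/-- Essential vertices: vertices appearing in inclusion-minimal elements of `U`. -/
def essVerts (U : Set (Finset V)) : Set V :=
  {v | ∃ σ ∈ U, v ∈ σ ∧ ∀ τ ∈ U, τ ⊆ σ → τ = σ}

/-- Flag complex: every nonempty set of vertices pairwise spanning faces is a face. -/
def IsFlag (C : Set (Finset V)) : Prop :=
  ∀ τ : Finset V, τ.Nonempty → (∀ a ∈ τ, ∀ b ∈ τ, ({a, b} : Finset V) ∈ C) → τ ∈ C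

/-- A facet: an inclusion-maximal face. -/
def IsFacet (C : Set (Finset V)) (A : Finset V) : Prop :=
  A ∈ C ∧ ∀ B ∈ C, A ⊆ B → B = A

/-- Pure of dimension `d`: every face lies in a facet and all facets have `d+1` vertices. -/
def IsPure (C : Set (Finset V)) (d : ℕ) : Prop :=
  (∀ σ ∈ C, ∃ A, IsFacet C A ∧ σ ⊆ A) ∧ ∀ A, IsFacet C A → A.card = d + 1

/-- Without boundary: every non-maximal face lies in at least two facets. -/
def NoBoundary (C : Set (Finset V)) : Prop :=
  ∀ σ ∈ C, ¬ IsFacet C σ →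
    ∃ A B, IsFacet C A ∧ IsFacet C B ∧ A ≠ B ∧ σ ⊆ A ∧ σ ⊆ B

/-- The missing edge exchange property for a pure `d`-complex. -/
def MEEP (C : Set (Finset V)) (d : ℕ) : Prop :=
  ∀ σ ∈ C, σ.card = d → ∀ v ∉ σ, IsFacet C (insert v σ) →
    ∃ u, u ≠ v ∧ u ∉ σ ∧ IsFacet C (insert u σ) ∧ ({u, v} : Finset V) ∉ C

/-- The star of a vertex: the set of facets containing it. -/
def vertexStar (C : Set (Finset V)) (v : V) : Set (Finset V) :=
  {A | IsFacet C A ∧ v ∈ A}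

/-- An intersecting family: any two members share a vertex. -/
def Intersecting (F : Set (Finset V)) : Prop :=
  ∀ A ∈ F, ∀ B ∈ F, (A ∩ B).Nonempty

/-- Pure-EKR: every intersecting family of facets is at most as large as some vertex star. -/
def PureEKR (C : Set (Finset V)) : Prop :=
  ∀ F : Set (Finset V), (∀ A ∈ F, IsFacet C A) → Intersecting F →
    ∃ v, ({v} : Finset V) ∈ C ∧ F.ncard ≤ (vertexStar C v).ncard


/-- The intersection of sectors S_τ = ∩_{a ∈ τ} (link_C(a) minus σ). -/
def SectorInt (C : Set (Finset V)) (σ τ : Finset V) : Set (Finset V) :=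
  {ρ ∈ C | ρ ∩ σ = ∅ ∧ ∀ a ∈ τ, insert a ρ ∈ C}

/-! A sector element `ρ` is joined to all of `τ ⊆ σ`, so by flagness `τ ∪ ρ` is a face, giving
`|ρ| + |τ| ≤ d + 1`. If `ρ` is maximal but `τ ∪ ρ` is not a facet, it lies in two distinct
facets `A`, `B`. A vertex of `A` outside `σ` could be added to `ρ`, so by maximality it lies in
`ρ ⊆ B`, and symmetrically. Hence every pair of vertices of `A ∪ B` lies in `A`, in `B` or in `σ`,
so `A ∪ B` is a face by flagness, forcing `A = B`. -/

section Complex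

variable {C : Set (Finset V)}

omit [DecidableEq V] in
theorem IsPure.card_le_of_mem {d : ℕ} (hpure : IsPure C d) {s : Finset V} (hs : s ∈ C) :
    s.card ≤ d + 1 := by
  obtain ⟨A, hA, hsA⟩ := hpure.1 s hs
  exact hpure.2 A hA ▸ Finset.card_le_card hsA

theorem IsComplex.pair_mem (hC : IsComplex C) {s : Finset V} (hs : s ∈ C) {a b : V}
    (ha : a ∈ s) (hb : b ∈ s) : ({a, b} : Finset V) ∈ C :=
  hC s hs _ (Finset.insert_subset ha (Finset.singleton_subset_iff.2 hb))

theorem IsFlag.union_mem (hC : IsComplex C) (hflag : IsFlag C) {s t : Finset V}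
    (hs : s ∈ C) (ht : t ∈ C) (hst : ∀ a ∈ s, ∀ b ∈ t, ({a, b} : Finset V) ∈ C) :
    s ∪ t ∈ C := by
  rcases (s ∪ t).eq_empty_or_nonempty with h | h
  · exact h ▸ hC s hs ∅ (Finset.empty_subset s)
  refine hflag _ h fun a ha b hb => ?_
  rcases Finset.mem_union.1 ha with ha | ha <;> rcases Finset.mem_union.1 hb with hb | hb
  · exact hC.pair_mem hs ha hb
  · exact hst a ha b hb
  · exact Finset.pair_comm a b ▸ hst b hb a ha
  · exact hC.pair_mem ht ha hb

theorem IsFlag.union_mem_of_sdiff_subset (hC : IsComplex C) (hflag : IsFlag C)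
    {σ A B : Finset V} (hσ : σ ∈ C) (hA : A ∈ C) (hB : B ∈ C)
    (hAB : A \ σ ⊆ B) (hBA : B \ σ ⊆ A) : A ∪ B ∈ C := by
  refine hflag.union_mem hC hA hB fun a ha b hb => ?_
  by_cases haσ : a ∈ σ
  · by_cases hbσ : b ∈ σ
    · exact hC.pair_mem hσ haσ hbσ
    · exact hC.pair_mem hA ha (hBA (Finset.mem_sdiff.2 ⟨hb, hbσ⟩))
  · exact hC.pair_mem hB (hAB (Finset.mem_sdiff.2 ⟨ha, haσ⟩)) hb

theorem IsFacet.eq_of_union_mem {A B : Finset V} (hA : IsFacet C A) (hB : IsFacet C B)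
    (hAB : A ∪ B ∈ C) : A = B :=
  hB.2 A hA.1 (hA.2 _ hAB Finset.subset_union_left ▸ Finset.subset_union_right)

end Complex

omit [DecidableEq V] in
theorem exists_maximal_superset_of_card_le {S : Set (Finset V)} {N : ℕ}
    (hS : ∀ s ∈ S, s.card ≤ N) {s : Finset V} (hs : s ∈ S) :
    ∃ t ∈ S, s ⊆ t ∧ ∀ u ∈ S, t ⊆ u → u = t := by
  obtain ⟨t, ⟨htS, hst⟩, hmin⟩ :=
    (measure fun t : Finset V => N - t.card).wf.has_min {t | t ∈ S ∧ s ⊆ t} ⟨s, hs, le_rfl⟩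
  refine ⟨t, htS, hst, fun u huS htu => ?_⟩
  have hu : ¬ N - u.card < N - t.card := hmin u ⟨huS, hst.trans htu⟩
  exact (Finset.eq_of_subset_of_card_le htu (by have := hS u huS; omega)).symm

section Sector

variable {C : Set (Finset V)} {σ τ ρ : Finset V}

theorem disjoint_of_mem_sectorInt (hτ : τ ⊆ σ) (hρ : ρ ∈ SectorInt C σ τ) : Disjoint τ ρ :=
  Finset.disjoint_of_subset_left hτ
    (Finset.disjoint_iff_inter_eq_empty.2 (Finset.inter_comm σ ρ ▸ hρ.2.1))

theorem union_mem_of_mem_sectorInt (hC : IsComplex C) (hflag : IsFlag C) (hσ : σ ∈ C)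
    (hτ : τ ⊆ σ) (hρ : ρ ∈ SectorInt C σ τ) : τ ∪ ρ ∈ C :=
  hflag.union_mem hC (hC σ hσ τ hτ) hρ.1 fun a ha _ hb =>
    hC.pair_mem (hρ.2.2 a ha) (Finset.mem_insert_self a ρ) (Finset.mem_insert_of_mem hb)

theorem card_add_card_le_of_mem_sectorInt {d : ℕ} (hC : IsComplex C) (hflag : IsFlag C)
    (hpure : IsPure C d) (hσ : σ ∈ C) (hτ : τ ⊆ σ) (hρ : ρ ∈ SectorInt C σ τ) :
    ρ.card + τ.card ≤ d + 1 := by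
  have h := hpure.card_le_of_mem (union_mem_of_mem_sectorInt hC hflag hσ hτ hρ)
  rwa [Finset.card_union_of_disjoint (disjoint_of_mem_sectorInt hτ hρ), add_comm] at h

theorem sdiff_subset_of_maximal_sectorInt (hC : IsComplex C) (hρ : ρ ∈ SectorInt C σ τ)
    (hmax : ∀ ρ' ∈ SectorInt C σ τ, ρ ⊆ ρ' → ρ' = ρ) {D : Finset V} (hD : D ∈ C)
    (hτρD : τ ∪ ρ ⊆ D) : D \ σ ⊆ ρ := by
  intro v hv
  obtain ⟨hvD, hvσ⟩ := Finset.mem_sdiff.1 hv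
  have hρD : ρ ⊆ D := Finset.subset_union_right.trans hτρD
  have hvρ : insert v ρ ∈ SectorInt C σ τ := by
    refine ⟨hC D hD _ (Finset.insert_subset hvD hρD), ?_, fun a ha => ?_⟩
    · rw [Finset.insert_inter_of_notMem hvσ, hρ.2.1]
    · exact hC D hD _ (Finset.insert_subset (hτρD (Finset.mem_union_left ρ ha))
        (Finset.insert_subset hvD hρD))
  exact hmax _ hvρ (Finset.subset_insert v ρ) ▸ Finset.mem_insert_self v ρ

theorem card_add_card_eq_of_maximal_sectorInt {d : ℕ} (hC : IsComplex C) (hflag : IsFlag C)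
    (hpure : IsPure C d) (hnb : NoBoundary C) (hσ : σ ∈ C) (hτ : τ ⊆ σ)
    (hρ : ρ ∈ SectorInt C σ τ) (hmax : ∀ ρ' ∈ SectorInt C σ τ, ρ ⊆ ρ' → ρ' = ρ) :
    ρ.card + τ.card = d + 1 := by
  have hγ := union_mem_of_mem_sectorInt hC hflag hσ hτ hρ
  have hγcard : (τ ∪ ρ).card = ρ.card + τ.card := by
    rw [Finset.card_union_of_disjoint (disjoint_of_mem_sectorInt hτ hρ), add_comm]
  by_contra hne
  have hγfacet : ¬ IsFacet C (τ ∪ ρ) := fun h => hne (hγcard ▸ hpure.2 _ h)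
  obtain ⟨A, B, hA, hB, hAB, hγA, hγB⟩ := hnb _ hγ hγfacet
  have hρA : ρ ⊆ A := Finset.subset_union_right.trans hγA
  have hρB : ρ ⊆ B := Finset.subset_union_right.trans hγB
  refine hAB (hA.eq_of_union_mem hB (hflag.union_mem_of_sdiff_subset hC hσ hA.1 hB.1 ?_ ?_))
  · exact (sdiff_subset_of_maximal_sectorInt hC hρ hmax hA.1 hγA).trans hρB
  · exact (sdiff_subset_of_maximal_sectorInt hC hρ hmax hB.1 hγB).trans hρA

end Sector

theorem stmt10_general (C : Set (Finset V)) (d k : ℕ) (hC : IsComplex C) (hflag : IsFlag C)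
    (hpure : IsPure C d) (hnb : NoBoundary C)
    (σ τ : Finset V) (hσ : σ ∈ C) (hτ : τ ⊆ σ) (hk : τ.card = k) :
    (∀ ρ ∈ SectorInt C σ τ, (∀ ρ' ∈ SectorInt C σ τ, ρ ⊆ ρ' → ρ' = ρ) →
      ρ.card + k = d + 1) ∧
    (∀ ρ ∈ SectorInt C σ τ, ∃ ρ' ∈ SectorInt C σ τ, ρ ⊆ ρ' ∧ ρ'.card + k = d + 1) := by
  subst hk
  have hmaxCard := fun ρ (hρ : ρ ∈ SectorInt C σ τ) hmax =>
    card_add_card_eq_of_maximal_sectorInt hC hflag hpure hnb hσ hτ hρ hmax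
  refine ⟨hmaxCard, fun ρ hρ => ?_⟩
  obtain ⟨ρ', hρ', hρρ', hmax⟩ := exists_maximal_superset_of_card_le
    (fun _ hρ => hpure.card_le_of_mem hρ.1) hρ
  exact ⟨ρ', hρ', hρρ', hmaxCard ρ' hρ' hmax⟩

/-- for a flag pure d-complex without boundary, the intersection of k ≥ 1
sectors is pure of dimension d - k (maximal elements have d - k + 1 vertices,
and every element is contained in a maximal one of that size). -/
theorem stmt10 (C : Set (Finset V)) (d k : ℕ) (hC : IsComplex C) (hflag : IsFlag C)
    (hpure : IsPure C d) (hnb : NoBoundary C)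
    (σ τ : Finset V) (hσ : σ ∈ C) (hτ : τ ⊆ σ) (hk : τ.card = k) (hk1 : 1 ≤ k) :
    (∀ ρ ∈ SectorInt C σ τ, (∀ ρ' ∈ SectorInt C σ τ, ρ ⊆ ρ' → ρ' = ρ) →
      ρ.card + k = d + 1) ∧
    (∀ ρ ∈ SectorInt C σ τ, ∃ ρ' ∈ SectorInt C σ τ, ρ ⊆ ρ' ∧ ρ'.card + k = d + 1) :=
  stmt10_general C d k hC hflag hpure hnb σ τ hσ hτ hk
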